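/- There exists c₀ ∈ (0, c_crit) such that for every c with c₀ < c < c_crit, there is no solution h : [0, 1] → (-1, 1) of the transformed Jang equation dh/ds = F_c(s, h(s)) with h(0) = 0. (Equivalently, the maximal solution h_c with h_c(0) = 0 attains the value -1 at some s* ∈ (0, 1].) -/

import Mathlib

/-- The function `φ(r) = e^{r/(2m)-1}(r - 2m)` defining the Kruskal radius implicitly. -/
noncomputable def phi (m r : ℝ) : ℝ := Real.exp (r / (2*m) - 1) * (r - 2*m)

/-- The derivative `φ_r(r) = (r/(2m)) e^{r/(2m)-1}`. -/
noncomputable def phiR (m r : ℝ) : ℝ := (r / (2*m)) * Real.exp (r / (2*m) - 1)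

/-- The critical parameter `c_crit = √(8m/e)`. -/
noncomputable def cCrit (m : ℝ) : ℝ := Real.sqrt (8*m / Real.exp 1)

/-- The right-hand side of Jang's equation on the slice `L_c`:
`f''(u) = jangRHS m c u r (f'(u))` where `r = r(u)` solves `φ(r) = u(u+c)`. -/
noncomputable def jangRHS (m c u r p : ℝ) : ℝ :=
  c * Real.sqrt (2*m / phiR m r + p^2/4) *
      ((1 / phiR m r) * (1/(2*m) - 3/r) - p^2/(2*m*r))
    - ((2*u + c)/(4*m*r)) * p^3
    - ((2*u + c)/(2 * phiR m r)) * (1/(2*m) + 5/r) * p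

/-- The right-hand side `F_c(s,h)` of the transformed Jang equation,
with `r = r_c(s)` solving `φ(r) = (c²/4)(s²-1)`. -/
noncomputable def Fc (m c s r h : ℝ) : ℝ :=
  (c^2/2) * Real.sqrt (2*m*(1 - h^2) / phiR m r + h^2/4) *
      (((1 - h^2) / phiR m r) * (1/(2*m) - 3/r) - h^2/(2*m*r))
    - (c^2*s/(8*m*r)) * h^3
    - (c^2*s/(4 * phiR m r)) * (1/(2*m) + 5/r) * (h*(1 - h^2))

/-!
Take `δ = m / (500 (1 + m²))`. For `c` close to `c_crit` and `s ∈ [0, δ]` the radius `r_c(s)`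
is at most `4mδ`, because `φ(r_c(s))` is then close to `φ(0) = -2m/e`. The dominant terms of `F_c` are of order `1/r`, and they give
`F_c(s, h) ≤ -(4/δ) (1 - |h|)^{3/4}`. So a solution with `h(0) = 0` decreases, and
`w = (1 + h)^{1/4}` satisfies `w' ≤ -1/δ`: `w` vanishes, i.e. `h` reaches `-1`, before `s = δ`.
-/

open Real Set

section Phi

variable {m : ℝ}

lemma hasDerivAt_phi (hm : m ≠ 0) (r : ℝ) : HasDerivAt (phi m) (phiR m r) r := by
  have hlin : HasDerivAt (fun r : ℝ => r / (2*m) - 1) (1/(2*m)) r := by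
    simpa using ((hasDerivAt_id r).div_const (2*m)).sub_const 1
  refine (hlin.exp.mul ((hasDerivAt_id r).sub_const (2*m))).congr_deriv ?_
  simp only [phiR, id]
  field_simp
  ring

lemma phiR_pos (hm : 0 < m) {r : ℝ} (hr : 0 < r) : 0 < phiR m r := by
  unfold phiR; positivity

lemma phiR_le (hm : 0 < m) {r : ℝ} (hr0 : 0 ≤ r) (hr : r ≤ 2*m) : phiR m r ≤ r / (2*m) := by
  have hexp : exp (r / (2*m) - 1) ≤ 1 := by
    rw [exp_le_one_iff, sub_nonpos, div_le_one (by positivity)]; exact hr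
  unfold phiR
  exact mul_le_of_le_one_right (by positivity) hexp

lemma phi_strictMonoOn (hm : 0 < m) : StrictMonoOn (phi m) (Ici 0) := by
  refine strictMonoOn_of_hasDerivWithinAt_pos (convex_Ici 0)
    (fun r _ => (hasDerivAt_phi hm.ne' r).continuousAt.continuousWithinAt)
    (fun r _ => (hasDerivAt_phi hm.ne' r).hasDerivWithinAt) fun r hr => ?_
  rw [interior_Ici] at hr
  exact phiR_pos hm hr

lemma phi_zero (m : ℝ) : phi m 0 = -(2*m / exp 1) := by
  rw [phi, zero_div, zero_sub, exp_neg]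
  ring

/-- `φ_r(r) ≥ r/(2me)` on `[0, ∞)`, integrated from `0`. -/
lemma phi_zero_add_sq_le (hm : 0 < m) {r : ℝ} (hr : 0 ≤ r) :
    phi m 0 + r^2 / (4*m*exp 1) ≤ phi m r := by
  have hmono : MonotoneOn (fun r => phi m r - r^2 / (4*m*exp 1)) (Ici 0) := by
    refine monotoneOn_of_hasDerivWithinAt_nonneg (convex_Ici 0)
      (f' := fun r => phiR m r - r / (2*m*exp 1)) ?_ (fun r _ => ?_) fun r hr => ?_
    · exact fun r _ => ((hasDerivAt_phi hm.ne' r).continuousAt.sub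
        (by fun_prop)).continuousWithinAt
    · refine ((hasDerivAt_phi hm.ne' r).sub ?_).hasDerivWithinAt
      refine ((hasDerivAt_pow 2 r).div_const (4*m*exp 1)).congr_deriv ?_
      field_simp
      ring
    · rw [interior_Ici] at hr
      have hr0 : 0 < r / (2*m) := div_pos hr (by positivity)
      have hexp : (exp 1)⁻¹ ≤ exp (r / (2*m) - 1) := by
        rw [← exp_neg]; exact exp_le_exp.2 (by linarith)
      have : r / (2*m*exp 1) = r / (2*m) * (exp 1)⁻¹ := by field_simp
      simp only [phiR, this, sub_nonneg]
      exact mul_le_mul_of_nonneg_left hexp hr0.le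
  have := hmono self_mem_Ici hr hr
  simp only [ne_eq, OfNat.ofNat_ne_zero, not_false_eq_true, zero_pow, zero_div, sub_zero] at this
  linarith

lemma le_of_phi_le (hm : 0 < m) {r ρ : ℝ} (hr : 0 ≤ r) (hρ : 0 ≤ ρ)
    (h : phi m r ≤ phi m 0 + ρ^2 / (4*m*exp 1)) : r ≤ ρ :=
  (phi_strictMonoOn hm).le_iff_le hr hρ |>.mp (h.trans (phi_zero_add_sq_le hm hρ))

lemma le_of_phi_eq (hm : 0 < m) {c δ s r : ℝ} (hδ : δ ≤ 1) (hs : s ∈ Icc 0 δ) (hr : 0 < r)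
    (hc : 8*m / exp 1 * (1 - δ^2) ≤ c^2) (hφ : phi m r = c^2/4 * (s^2 - 1)) :
    r ≤ 4*m*δ := by
  have hδ0 : 0 ≤ δ := hs.1.trans hs.2
  refine le_of_phi_le hm hr.le (by positivity) ?_
  have hs2 : s^2 ≤ δ^2 := pow_le_pow_left₀ hs.1 hs.2 2
  have hM : 0 < 2*m / exp 1 := by positivity
  have hcs : c^2 * (1 - δ^2) ≤ c^2 * (1 - s^2) :=
    mul_le_mul_of_nonneg_left (by linarith) (sq_nonneg c)
  have hcδ : 4 * (2*m / exp 1) * (1 - δ^2) * (1 - δ^2) ≤ c^2 * (1 - δ^2) := by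
    rw [show 4 * (2*m / exp 1) = 8*m / exp 1 by ring]
    exact mul_le_mul_of_nonneg_right hc (by nlinarith)
  rw [hφ, phi_zero]
  have : (4*m*δ)^2 / (4*m*exp 1) = 2*m / exp 1 * (2*δ^2) := by field_simp; ring
  rw [this]
  linarith [mul_nonneg hM.le (pow_nonneg hδ0 4)]

end Phi

noncomputable def descentRate (δ t a : ℝ) : ℝ := t^3 + (1 - δ) * a^3 / 4 - 3*δ/2 * t^2

lemma Fc_le_neg_mul_descentRate {m c s r h δ : ℝ} (hm : 0 < m) (hr : 0 < r) (hr2 : r ≤ 2*m)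
    (hs0 : 0 ≤ s) (hsδ : s ≤ δ) (hh : |h| < 1) :
    Fc m c s r h ≤ -(c^2 / (2*m*r)) * descentRate δ (√(2*m*(1 - h^2) / phiR m r)) |h| := by
  set P := phiR m r
  set q := 1 - h^2 with hq_def
  set t := √(2*m*q / P)
  set K := c^2 / (2*m*r) with hK_def
  have hP : 0 < P := phiR_pos hm hr
  have hh2 : h^2 = |h|^2 := (sq_abs h).symm
  have hq : 0 < q := by nlinarith [abs_nonneg h]
  have hK : 0 ≤ K := by positivity
  have hqt : 2*m*q / P = t^2 := (sq_sqrt (by positivity)).symm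
  have hS : √(2*m*q / P + h^2/4) = √(t^2 + (|h|/2)^2) := by rw [hqt, hh2]; ring_nf
  have hSt : t ≤ √(t^2 + (|h|/2)^2) := le_sqrt_of_sq_le (by nlinarith)
  have hSh : |h|/2 ≤ √(t^2 + (|h|/2)^2) := le_sqrt_of_sq_le (by nlinarith)
  have hbracket : (q/P) * (1/(2*m) - 3/r) - h^2/(2*m*r) ≤ -((2*t^2 + h^2) / (2*m*r)) := by
    have h1 : 1/(2*m) ≤ 1/r := one_div_le_one_div_of_le hr hr2
    have h2 : (q/P) * (1/(2*m) - 3/r) ≤ (q/P) * (-(2/r)) :=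
      mul_le_mul_of_nonneg_left (by linarith [show 3/r = 2/r + 1/r by ring]) (by positivity)
    have h3 : (q/P) * (-(2/r)) = -(2*t^2 / (2*m*r)) := by
      rw [← hqt]; field_simp
    rw [h3] at h2
    have : (2*t^2 + h^2) / (2*m*r) = 2*t^2 / (2*m*r) + h^2/(2*m*r) := add_div _ _ _
    linarith
  have hprincipal : (c^2/2) * √(t^2 + (|h|/2)^2) * ((q/P) * (1/(2*m) - 3/r) - h^2/(2*m*r))
      ≤ -K * (t^3 + |h|^3/4) := by
    have hsum : t * t^2 + |h|/2 * (|h|^2/2) ≤ √(t^2 + (|h|/2)^2) * t^2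
        + √(t^2 + (|h|/2)^2) * (|h|^2/2) :=
      add_le_add (mul_le_mul_of_nonneg_right hSt (sq_nonneg t))
        (mul_le_mul_of_nonneg_right hSh (by positivity))
    calc (c^2/2) * √(t^2 + (|h|/2)^2) * ((q/P) * (1/(2*m) - 3/r) - h^2/(2*m*r))
        ≤ (c^2/2) * √(t^2 + (|h|/2)^2) * -((2*t^2 + h^2) / (2*m*r)) :=
          mul_le_mul_of_nonneg_left hbracket (by positivity)
      _ = -K * (√(t^2 + (|h|/2)^2) * t^2 + √(t^2 + (|h|/2)^2) * (|h|^2/2)) := by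
          rw [hK_def, hh2]; field_simp
      _ ≤ -K * (t * t^2 + |h|/2 * (|h|^2/2)) :=
          mul_le_mul_of_nonpos_left hsum (neg_nonpos.2 hK)
      _ = -K * (t^3 + |h|^3/4) := by ring
  have hcubic : -(c^2*s/(8*m*r)) * h^3 ≤ K * (δ * |h|^3 / 4) := by
    have hh3 : -h^3 ≤ |h|^3 := by rw [← abs_pow]; exact neg_le_abs _
    have : s * -h^3 ≤ δ * |h|^3 :=
      (mul_le_mul_of_nonneg_left hh3 hs0).trans
        (mul_le_mul_of_nonneg_right hsδ (by positivity))
    calc -(c^2*s/(8*m*r)) * h^3 = K * (s * -h^3 / 4) := by rw [hK_def]; field_simp; ring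
      _ ≤ K * (δ * |h|^3 / 4) := mul_le_mul_of_nonneg_left (by linarith) hK
  have hlinear : -(c^2*s/(4*P)) * (1/(2*m) + 5/r) * (h*q) ≤ K * (3*δ/2 * t^2) := by
    have hhq : -(h*q) ≤ q := by nlinarith [neg_abs_le h]
    have hB : 1/(2*m) + 5/r ≤ 6/r := by
      linarith [one_div_le_one_div_of_le hr hr2, show 6/r = 1/r + 5/r by ring]
    have hA : 0 ≤ c^2*s/(4*P) := by positivity
    calc -(c^2*s/(4*P)) * (1/(2*m) + 5/r) * (h*q)
        = (c^2*s/(4*P)) * (1/(2*m) + 5/r) * -(h*q) := by ring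
      _ ≤ (c^2*s/(4*P)) * (1/(2*m) + 5/r) * q :=
          mul_le_mul_of_nonneg_left hhq (by positivity)
      _ ≤ (c^2*s/(4*P)) * (6/r) * q :=
          mul_le_mul_of_nonneg_right (mul_le_mul_of_nonneg_left hB hA) hq.le
      _ = K * (3*s/2 * t^2) := by rw [← hqt, hK_def]; field_simp; ring
      _ ≤ K * (3*δ/2 * t^2) := by gcongr
  have hFc : Fc m c s r h = (c^2/2) * √(t^2 + (|h|/2)^2) *
      ((q/P) * (1/(2*m) - 3/r) - h^2/(2*m*r)) - (c^2*s/(8*m*r)) * h^3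
      - (c^2*s/(4*P)) * (1/(2*m) + 5/r) * (h*q) := by
    rw [← hS]; rfl
  rw [hFc, descentRate]
  linarith

/-- Here `w = (1 - |h|)^{1/4}`, and `|h|` is written as `1 - w⁴`. -/
lemma mul_pow_three_le_descentRate {m δ t w : ℝ} (hm : 0 < m) (hδ : 0 < δ)
    (hδm : 500*δ ≤ m) (hmδ : 500*m*δ ≤ 1) (ht : 0 ≤ t) (hw0 : 0 ≤ w) (hw1 : w ≤ 1)
    (hwt : m * w^4 ≤ δ * t^2) : 16*m*w^3 ≤ descentRate δ t (1 - w^4) := by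
  have hδ1 : δ ≤ 1/500 := by nlinarith
  have htw : 500 * w^4 ≤ t^2 := by nlinarith [pow_nonneg hw0 4]
  have htmw : 500 * m^2 * w^4 ≤ t^2 := by nlinarith [pow_nonneg hw0 4]
  have hw4 : w^4 ≤ 1 := pow_le_one₀ hw0 hw1
  have hcubic : -(1/1000) ≤ t^3/2 - 3*δ/2 * t^2 := by
    rcases le_total (3*δ) t with h3δ | h3δ
    · nlinarith [sq_nonneg t]
    · nlinarith [sq_nonneg t, pow_le_pow_left₀ ht h3δ 2]
  unfold descentRate
  rcases le_total (w^4) (1/4) with hsmall | hlarge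
  · have ha : 27/64 ≤ (1 - w^4)^3 := by
      have := pow_le_pow_left₀ (by norm_num) (show (3:ℝ)/4 ≤ 1 - w^4 by linarith) 3
      norm_num at this ⊢; linarith
    have ht6 : (2560 * m^2 * w^6)^2 ≤ (t^3)^2 := by
      have := mul_le_mul (mul_le_mul htw htmw (by positivity) (by positivity)) htmw
        (by positivity) (by positivity)
      nlinarith [pow_nonneg hm.le 4, pow_nonneg hw0 12]
    have ht3 : 2560 * m^2 * w^6 ≤ t^3 := le_of_sq_le_sq ht6 (by positivity)
    have hamgm : 16*m*w^3 ≤ t^3/2 + 1/20 :=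
      le_of_sq_le_sq (by nlinarith [sq_nonneg (t^3/2 - 1/20)]) (by positivity)
    nlinarith
  · have ht11 : 11 ≤ t := le_of_sq_le_sq (by nlinarith) ht
    have htm : 11 * m ≤ t := le_of_sq_le_sq (by nlinarith) ht
    have hw3 : w^3 ≤ 1 := pow_le_one₀ hw0 hw1
    have ha : 0 ≤ (1 - w^4)^3 := pow_nonneg (by linarith) 3
    nlinarith [mul_le_mul htm ht11 (by norm_num) ht, mul_nonneg hm.le ht]

lemma Fc_le_neg_pow_three {m c s r h δ : ℝ} (hm : 0 < m) (hδ : 0 < δ) (hδm : 500*δ ≤ m)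
    (hmδ : 500*m*δ ≤ 1) (hc : 2*m ≤ c^2) (hs : s ∈ Icc 0 δ) (hr : 0 < r) (hr4 : r ≤ 4*m*δ)
    (hh : |h| < 1) : Fc m c s r h ≤ -(4/δ) * (√√(1 - |h|))^3 := by
  have hr2 : r ≤ 2*m := by nlinarith
  have hFc := Fc_le_neg_mul_descentRate (c := c) hm hr hr2 hs.1 hs.2 hh
  set t := √(2*m*(1 - h^2) / phiR m r)
  set w := √√(1 - |h|)
  have hP : 0 < phiR m r := phiR_pos hm hr
  have hP2 : phiR m r ≤ 2*δ := by
    have := phiR_le hm hr.le hr2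
    rw [le_div_iff₀ (by positivity)] at this
    nlinarith
  have hw4 : w^4 = 1 - |h| := by
    rw [show w^4 = (w^2)^2 by ring, sq_sqrt (sqrt_nonneg _), sq_sqrt (by linarith)]
  have hw1 : w ≤ 1 := sqrt_le_one.2 (sqrt_le_one.2 (by linarith [abs_nonneg h]))
  have hq : 1 - |h| ≤ 1 - h^2 := by nlinarith [sq_abs h, abs_nonneg h]
  have hwt : m * w^4 ≤ δ * t^2 := by
    have ht2 : t^2 * phiR m r = 2*m*(1 - h^2) := by
      rw [sq_sqrt (div_nonneg (by nlinarith [abs_nonneg h]) hP.le)]; field_simp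
    rw [hw4]
    nlinarith [mul_le_mul_of_nonneg_left hP2 (sq_nonneg t)]
  have hE := mul_pow_three_le_descentRate (t := t) (w := w) hm hδ hδm hmδ (sqrt_nonneg _)
    (sqrt_nonneg _) hw1 hwt
  rw [hw4, sub_sub_cancel] at hE
  have hK : 1 / (4*m*δ) ≤ c^2 / (2*m*r) := by
    rw [div_le_div_iff₀ (by positivity) (by positivity)]
    nlinarith
  calc Fc m c s r h ≤ -(c^2 / (2*m*r)) * descentRate δ t |h| := hFc
    _ ≤ -(1 / (4*m*δ)) * descentRate δ t |h| :=
        mul_le_mul_of_nonneg_right (neg_le_neg hK) (hE.trans' (by positivity))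
    _ ≤ -(1 / (4*m*δ)) * (16*m*w^3) :=
        mul_le_mul_of_nonpos_left hE (by simp only [neg_nonpos]; positivity)
    _ = -(4/δ) * w^3 := by field_simp; ring

lemma antitoneOn_Icc_of_hasDerivWithinAt_nonpos {f f' : ℝ → ℝ} {a b : ℝ}
    (hf : ∀ x ∈ Icc a b, HasDerivWithinAt f (f' x) (Icc a b) x)
    (hf' : ∀ x ∈ Ioo a b, f' x ≤ 0) : AntitoneOn f (Icc a b) :=
  antitoneOn_of_hasDerivWithinAt_nonpos (convex_Icc a b)
    (fun x hx => (hf x hx).continuousWithinAt)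
    (fun x hx => by
      rw [interior_Icc] at hx ⊢
      exact (hf x (Ioo_subset_Icc_self hx)).mono Ioo_subset_Icc_self)
    (fun x hx => hf' x (by rwa [interior_Icc] at hx))

lemma not_forall_abs_lt_one_of_deriv_le {h h' : ℝ → ℝ} {δ : ℝ} (hδ : 0 < δ) (h0 : h 0 = 0)
    (hderiv : ∀ s ∈ Icc 0 δ, HasDerivWithinAt h (h' s) (Icc 0 δ) s)
    (hbound : ∀ s ∈ Icc 0 δ, |h s| < 1 → h' s ≤ -(4/δ) * (√√(1 - |h s|))^3) :
    ¬ ∀ s ∈ Icc 0 δ, |h s| < 1 := by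
  intro hlt
  have hbound' : ∀ s ∈ Icc 0 δ, h' s ≤ -(4/δ) * (√√(1 - |h s|))^3 :=
    fun s hs => hbound s hs (hlt s hs)
  have hanti : AntitoneOn h (Icc 0 δ) :=
    antitoneOn_Icc_of_hasDerivWithinAt_nonpos hderiv fun s hs =>
      (hbound' s (Ioo_subset_Icc_self hs)).trans (by
        have : 0 ≤ 4/δ := by positivity
        nlinarith [pow_nonneg (sqrt_nonneg (√(1 - |h s|))) 3])
  have habs : ∀ s ∈ Icc 0 δ, |h s| = -h s := fun s hs =>
    abs_of_nonpos (h0 ▸ hanti (left_mem_Icc.2 hδ.le) hs hs.1)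
  have hpos : ∀ s ∈ Icc 0 δ, 0 < 1 + h s := fun s hs => by
    have := hlt s hs; rw [habs s hs] at this; linarith
  have hg : AntitoneOn (fun s => √√(1 + h s) + s/δ) (Icc 0 δ) := by
    refine antitoneOn_Icc_of_hasDerivWithinAt_nonpos
      (f' := fun s => h' s / (2 * √(1 + h s)) / (2 * √√(1 + h s)) + 1/δ)
      (fun s hs => ?_) fun s hs => ?_
    · exact ((((hderiv s hs).const_add 1).sqrt (hpos s hs).ne').sqrt
        (sqrt_pos.2 (hpos s hs)).ne').add ((hasDerivWithinAt_id s _).div_const δ)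
    · have hs' := Ioo_subset_Icc_self hs
      have hb := hbound' s hs'
      rw [habs s hs', sub_neg_eq_add] at hb
      set w := √√(1 + h s)
      have hw : 0 < w := sqrt_pos.2 (sqrt_pos.2 (hpos s hs'))
      have hw2 : √(1 + h s) = w^2 := (sq_sqrt (sqrt_nonneg _)).symm
      have : h' s / (2 * √(1 + h s)) / (2 * w) ≤ -(1/δ) := by
        rw [hw2, div_div, div_le_iff₀ (by positivity)]
        linarith [show -(1/δ) * (2 * w^2 * (2 * w)) = -(4/δ) * w^3 by ring]
      linarith
  have := hg (left_mem_Icc.2 hδ.le) (right_mem_Icc.2 hδ.le) hδ.le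
  simp only [h0, add_zero, sqrt_one, zero_div, div_self hδ.ne'] at this
  linarith [sqrt_pos.2 (sqrt_pos.2 (hpos δ (right_mem_Icc.2 hδ.le)))]

/-- There exists `c₀ ∈ (0, c_crit)` such that for every
`c ∈ (c₀, c_crit)` there is no solution `h : [0,1] → (-1,1)` of the transformed Jang
equation with `h(0) = 0`. -/
theorem transformed_no_solution (m : ℝ) (hm : 0 < m) :
    ∃ c₀ ∈ Set.Ioo 0 (cCrit m), ∀ c, c₀ < c → c < cCrit m →
      ∀ Rc : ℝ → ℝ, (∀ s, 0 < Rc s ∧ phi m (Rc s) = c^2/4 * (s^2 - 1)) →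
        ¬ ∃ h : ℝ → ℝ, h 0 = 0 ∧
            ∀ s ∈ Set.Icc (0:ℝ) 1, h s ∈ Set.Ioo (-1:ℝ) 1 ∧
              HasDerivWithinAt h (Fc m c s (Rc s) (h s)) (Set.Icc (0:ℝ) 1) s := by
  set δ := m / (500 * (1 + m^2))
  have hδ : 0 < δ := by positivity
  have hδm : 500*δ ≤ m := by
    rw [mul_div_assoc', div_le_iff₀ (by positivity)]; nlinarith [sq_nonneg m]
  have hmδ : 500*m*δ ≤ 1 := by
    rw [mul_div_assoc', div_le_one (by positivity)]; nlinarith [sq_nonneg m]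
  have hδ1 : δ ≤ 1/500 := by nlinarith
  have he : 0 < exp 1 := exp_pos 1
  have hlow : 2*m < 8*m / exp 1 * (1 - δ^2) := by
    rw [div_mul_eq_mul_div, lt_div_iff₀ he]
    nlinarith [exp_one_lt_d9]
  refine ⟨√(8*m / exp 1 * (1 - δ^2)), ⟨sqrt_pos.2 (by linarith), ?_⟩, ?_⟩
  · exact sqrt_lt_sqrt (by linarith) (mul_lt_of_lt_one_right (by positivity) (by nlinarith))
  rintro c hc₀ - Rc hRc ⟨h, h0, hsol⟩
  have hc₀2 : 8*m / exp 1 * (1 - δ^2) ≤ c^2 :=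
    (sq_sqrt (by linarith)).symm.le.trans (pow_le_pow_left₀ (sqrt_nonneg _) hc₀.le 2)
  have hsub : Icc 0 δ ⊆ Icc 0 1 := Icc_subset_Icc_right (by linarith)
  refine not_forall_abs_lt_one_of_deriv_le hδ h0 (fun s hs => (hsol s (hsub hs)).2.mono hsub)
    (fun s hs hh => Fc_le_neg_pow_three hm hδ hδm hmδ (by linarith) hs (hRc s).1
      (le_of_phi_eq hm (by linarith) hs (hRc s).1 hc₀2 (hRc s).2) hh)
    fun s hs => abs_lt.2 (hsol s (hsub hs)).1
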